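/- Let D = A₂(ℂ) be the Weyl algebra on the variables x₀, x₁ and set ∇ = x₀∂₀ + x₁∂₁. Then the left ideals K_n := D·(x₀∂₀)^n + D·∇ form a strictly decreasing chain K₀ ⊋ K₁ ⊋ K₂ ⊋ ⋯; in particular the left D-module D/D∇ does not have finite length. -/

import Mathlib

/-! STATEMENT 17: in the Weyl algebra `D = A₂(ℂ)` with `∇ = x₀∂₀ + x₁∂₁`, the left
ideals `K_n = D·(x₀∂₀)^n + D·∇` form a strictly decreasing chain; in particular the
left `D`-module `D/D∇` does not have finite length. -/

open MvPolynomial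

set_option maxHeartbeats 1000000
set_option synthInstance.maxHeartbeats 400000

noncomputable section

/-- The polynomial ring `ℂ[x₀, x₁]`. -/
abbrev P2 : Type := MvPolynomial (Fin 2) ℂ

/-- The multiplication operator `xᵢ` on `ℂ[x₀,x₁]`. -/
noncomputable def xop (i : Fin 2) : Module.End ℂ P2 := LinearMap.mulLeft ℂ (X i)

/-- The partial derivative operator `∂ᵢ` on `ℂ[x₀,x₁]`. -/
noncomputable def dop (i : Fin 2) : Module.End ℂ P2 := (pderiv i).toLinearMap

/-- The Weyl algebra `A₂(ℂ)` realized concretely as the `ℂ`-subalgebra of the `ℂ`-linear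
endomorphisms of `ℂ[x₀,x₁]` generated by the multiplication operators `x₀, x₁` and the
partial-derivative operators `∂₀, ∂₁`. -/
noncomputable def Dsub : Subalgebra ℂ (Module.End ℂ P2) :=
  Algebra.adjoin ℂ {xop 0, xop 1, dop 0, dop 1}

/-- The Weyl algebra `D = A₂(ℂ)`. -/
noncomputable def DW : Type := Dsub

noncomputable instance : Ring DW := inferInstanceAs (Ring Dsub)
noncomputable instance : Algebra ℂ DW := inferInstanceAs (Algebra ℂ Dsub)

/-- `x₀` as an element of the Weyl algebra. -/
noncomputable def x₀ : DW := (⟨xop 0, Algebra.subset_adjoin (by simp)⟩ : Dsub)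
/-- `x₁` as an element of the Weyl algebra. -/
noncomputable def x₁ : DW := (⟨xop 1, Algebra.subset_adjoin (by simp)⟩ : Dsub)
/-- `∂₀` as an element of the Weyl algebra. -/
noncomputable def δ₀ : DW := (⟨dop 0, Algebra.subset_adjoin (by simp)⟩ : Dsub)
/-- `∂₁` as an element of the Weyl algebra. -/
noncomputable def δ₁ : DW := (⟨dop 1, Algebra.subset_adjoin (by simp)⟩ : Dsub)

/-- The left ideal `I = (x₀∂₀ - x₁∂₁, ∂₀∂₁)`. -/
noncomputable def Iid : Submodule DW DW := Submodule.span DW {x₀ * δ₀ - x₁ * δ₁, δ₀ * δ₁}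
/-- The left ideal `J₀ = (x₀∂₀, x₁∂₁, ∂₀∂₁)`. -/
noncomputable def J0 : Submodule DW DW := Submodule.span DW {x₀ * δ₀, x₁ * δ₁, δ₀ * δ₁}
/-- The left ideal `J₁ = (∂₀, x₁∂₁)`. -/
noncomputable def J1 : Submodule DW DW := Submodule.span DW {δ₀, x₁ * δ₁}
/-- The left ideal `J₂ = (x₀∂₀, ∂₁)`. -/
noncomputable def J2 : Submodule DW DW := Submodule.span DW {x₀ * δ₀, δ₁}
/-- The left ideal `J∞ = (∂₀, ∂₁)`. -/
noncomputable def Jinf : Submodule DW DW := Submodule.span DW {δ₀, δ₁}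

/-- The left ideal `K_n = D·(x₀∂₀)^n + D·∇`, where `∇ = x₀∂₀ + x₁∂₁`. -/
noncomputable def Kid (n : ℕ) : Submodule DW DW :=
  Submodule.span DW {(x₀ * δ₀) ^ n, x₀ * δ₀ + x₁ * δ₁}

/-! Write `θᵢ = xᵢ∂ᵢ`, so that `∇ = θ₀ + θ₁`. Suppose `θ₀ⁿ = A θ₀ⁿ⁺¹ + B ∇` in `D`. Let `D` act
on the span of the formal monomials `x^(λ + k)`, `k ∈ ℤ²`, over `ℂ[λ₀, λ₁]` (the exponents `λᵢ` are
indeterminates); there `θᵢ x^λ = λᵢ x^λ`, and the coefficient of `x^λ` in the relation applied to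
`x^λ` reads `λ₀ⁿ = a λ₀ⁿ⁺¹ + b (λ₀ + λ₁)` in `ℂ[λ₀, λ₁]`, which is absurd after `λ₁ ↦ -λ₀`.

That this action is well defined, i.e. that relations between operators on `ℂ[x₀, x₁]` persist in
the generic module, is seen by specialising `λ` to large natural numbers `c`: then `x^(c + k)` is an
honest monomial, and a polynomial vanishing at all large integer points is zero.

Finally `D/D∇` contains the strictly decreasing chain `K_n/D∇`, so it is not Artinian. -/

namespace Weyl

variable {K : Type*} [CommRing K] {σ : Type*}

variable (K σ) in
def polyRep : FreeAlgebra K (σ ⊕ σ) →ₐ[K] Module.End K (MvPolynomial σ K) :=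
  FreeAlgebra.lift K
    (Sum.elim (fun i => LinearMap.mulLeft K (X i)) fun i => (pderiv i).toLinearMap)

variable (K) in
def euler (i : σ) : FreeAlgebra K (σ ⊕ σ) := FreeAlgebra.ι K (.inl i) * FreeAlgebra.ι K (.inr i)

lemma polyRep_euler (i : σ) :
    polyRep K σ (euler K i) = LinearMap.mulLeft K (X i) * (pderiv i).toLinearMap := by
  simp [euler, polyRep]

/-- `Finsupp.single k r` stands for `r • x^(a + k)`, where the exponent `a : σ → R` is fixed by
the choice of `derivX a`. -/
abbrev ShiftedMonomials (σ R : Type*) [Semiring R] : Type _ := (σ →₀ ℤ) →₀ R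

section ShiftedMonomials

variable {R : Type*} [CommRing R]

def mulX (i : σ) : Module.End R (ShiftedMonomials σ R) :=
  Finsupp.lmapDomain R R (· + Finsupp.single i 1)

def derivX (a : σ → R) (i : σ) : Module.End R (ShiftedMonomials σ R) :=
  Finsupp.lsum R fun k => (a i + k i) • Finsupp.lsingle (k - Finsupp.single i 1)

@[simp] lemma mulX_single (i : σ) (k : σ →₀ ℤ) (r : R) :
    mulX i (Finsupp.single k r) = Finsupp.single (k + Finsupp.single i 1) r := by
  simp [mulX]

@[simp] lemma derivX_single (a : σ → R) (i : σ) (k : σ →₀ ℤ) (r : R) :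
    derivX a i (Finsupp.single k r) =
      Finsupp.single (k - Finsupp.single i 1) ((a i + k i) * r) := by
  simp only [derivX, Finsupp.lsum_single, LinearMap.smul_apply, Finsupp.lsingle_apply,
    Finsupp.smul_single, smul_eq_mul]

variable [Algebra K R]

variable (K) in
def shiftedRep (a : σ → R) :
    FreeAlgebra K (σ ⊕ σ) →ₐ[K] Module.End R (ShiftedMonomials σ R) :=
  FreeAlgebra.lift K (Sum.elim mulX (derivX a))

lemma mapRange_shiftedRep {S : Type*} [CommRing S] [Algebra K S] (φ : R →ₐ[K] S) (a : σ → R)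
    (w : FreeAlgebra K (σ ⊕ σ)) (m : ShiftedMonomials σ R) :
    Finsupp.mapRange.linearMap φ.toLinearMap (shiftedRep K a w m) =
      shiftedRep K (φ ∘ a) w (Finsupp.mapRange.linearMap φ.toLinearMap m) := by
  induction w using FreeAlgebra.induction generalizing m with
  | grade0 r => simp only [AlgHom.commutes, Module.algebraMap_end_apply, map_smul]
  | grade1 g =>
    induction m using Finsupp.induction_linear with
    | zero => simp only [map_zero]
    | add m m' hm hm' => simp only [map_add, hm, hm']
    | single k r => rcases g with i | i <;> simp [shiftedRep, -Finsupp.single_mul]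
  | mul w w' hw hw' => simp only [map_mul, Module.End.mul_apply, hw, hw']
  | add w w' hw hw' => simp only [map_add, LinearMap.add_apply, hw, hw']

lemma shiftedRep_euler_single (a : σ → R) (i : σ) (k : σ →₀ ℤ) (r : R) :
    shiftedRep K a (euler K i) (Finsupp.single k r) = (a i + k i) • Finsupp.single k r := by
  simp only [euler, shiftedRep, map_mul, FreeAlgebra.lift_ι_apply, Sum.elim_inl, Sum.elim_inr,
    Module.End.mul_apply, derivX_single, mulX_single, sub_add_cancel, Finsupp.smul_single,
    smul_eq_mul]

lemma shiftedRep_euler_pow_single (a : σ → R) (i : σ) (n : ℕ) (k : σ →₀ ℤ) (r : R) :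
    shiftedRep K a (euler K i ^ n) (Finsupp.single k r) =
      (a i + k i) ^ n • Finsupp.single k r := by
  induction n with
  | zero => simp
  | succ n ih =>
    rw [pow_succ', map_mul, Module.End.mul_apply, ih, map_smul, shiftedRep_euler_single,
      smul_smul, ← pow_succ]

end ShiftedMonomials

def shiftIndex (c u : σ →₀ ℕ) : σ →₀ ℤ :=
  u.mapRange Nat.cast Nat.cast_zero - c.mapRange Nat.cast Nat.cast_zero

@[simp] lemma shiftIndex_apply (c u : σ →₀ ℕ) (i : σ) : shiftIndex c u i = u i - c i := by
  simp [shiftIndex]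

/-- Reads the monomial `x^u` as `x^(c + (u - c))`. -/
def monomialShift (c : σ →₀ ℕ) : MvPolynomial σ K →ₗ[K] ShiftedMonomials σ K :=
  Finsupp.lmapDomain K K (shiftIndex c) ∘ₗ (basisMonomials σ K).repr.toLinearMap

lemma monomialShift_monomial (c u : σ →₀ ℕ) (r : K) :
    monomialShift c (monomial u r) = Finsupp.single (shiftIndex c u) r :=
  Finsupp.mapDomain_single

lemma monomialShift_X_mul (c : σ →₀ ℕ) (i : σ) (p : MvPolynomial σ K) :
    monomialShift c (X i * p) = mulX i (monomialShift c p) := by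
  induction p using MvPolynomial.induction_on' with
  | add p q hp hq => rw [mul_add, map_add, hp, hq, map_add, map_add]
  | monomial u r =>
    rw [← pow_one (X i), ← monomial_single_add, monomialShift_monomial, monomialShift_monomial,
      mulX_single]
    congr 1
    ext j
    by_cases hj : j = i
    · subst hj
      simp only [shiftIndex_apply, Finsupp.coe_add, Pi.add_apply, Finsupp.single_eq_same,
        Nat.cast_add, Nat.cast_one]
      ring
    · simp [Ne.symm hj]

lemma monomialShift_pderiv (c : σ →₀ ℕ) (i : σ) (p : MvPolynomial σ K) :
    monomialShift c (pderiv i p) = derivX (fun i => (c i : K)) i (monomialShift c p) := by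
  induction p using MvPolynomial.induction_on' with
  | add p q hp hq => rw [map_add, map_add, hp, hq, map_add, map_add]
  | monomial u r =>
    rw [pderiv_monomial, monomialShift_monomial, monomialShift_monomial, derivX_single]
    rcases Nat.eq_zero_or_pos (u i) with hu | hu
    · simp [hu]
    · congr 1
      · ext j
        by_cases hj : j = i
        · subst hj
          simp only [shiftIndex_apply, Finsupp.coe_tsub, Pi.sub_apply, Finsupp.single_eq_same,
            Finsupp.coe_sub]
          omega
        · simp [Ne.symm hj]
      · simp only [shiftIndex_apply, Int.cast_sub, Int.cast_natCast, add_sub_cancel]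
        ring

lemma shiftedRep_monomialShift (c : σ →₀ ℕ) (w : FreeAlgebra K (σ ⊕ σ)) (p : MvPolynomial σ K) :
    shiftedRep K (fun i => (c i : K)) w (monomialShift c p) =
      monomialShift c (polyRep K σ w p) := by
  induction w using FreeAlgebra.induction generalizing p with
  | grade0 r => simp only [AlgHom.commutes, Module.algebraMap_end_apply, map_smul]
  | grade1 g =>
    rcases g with i | i <;>
      simp only [shiftedRep, polyRep, FreeAlgebra.lift_ι_apply, Sum.elim_inl, Sum.elim_inr,
        LinearMap.mulLeft_apply, Derivation.coeFn_coe, monomialShift_X_mul, monomialShift_pderiv]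
  | mul w w' hw hw' => simp only [map_mul, Module.End.mul_apply, hw, hw']
  | add w w' hw hw' => simp only [map_add, LinearMap.add_apply, hw, hw']

lemma eval_shiftedRep_X_single (c u : σ →₀ ℕ) (w : FreeAlgebra K (σ ⊕ σ)) (β : σ →₀ ℤ) :
    eval (fun i => (c i : K)) (shiftedRep K X w (Finsupp.single (shiftIndex c u) 1) β) =
      monomialShift c (polyRep K σ w (monomial u 1)) β := by
  have hX : (aeval fun i => (c i : K)) ∘ (X : σ → MvPolynomial σ K) = fun i => (c i : K) :=
    funext (aeval_X _)
  have hspec := mapRange_shiftedRep (aeval fun i => (c i : K)) X w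
    (Finsupp.single (shiftIndex c u) 1)
  rw [hX, Finsupp.mapRange.linearMap_apply, Finsupp.mapRange.linearMap_apply,
    Finsupp.mapRange_single, AlgHom.toLinearMap_apply, map_one,
    ← monomialShift_monomial c u (1 : K), shiftedRep_monomialShift] at hspec
  rw [← hspec, Finsupp.mapRange_apply, AlgHom.toLinearMap_apply]
  rfl

theorem shiftedRep_X_eq_of_polyRep_eq [IsDomain K] [CharZero K] [Finite σ]
    {w₁ w₂ : FreeAlgebra K (σ ⊕ σ)} (h : polyRep K σ w₁ = polyRep K σ w₂) :
    shiftedRep K (X : σ → MvPolynomial σ K) w₁ = shiftedRep K X w₂ := by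
  refine Finsupp.lhom_ext' fun α => LinearMap.ext_ring <| Finsupp.ext fun β => ?_
  refine MvPolynomial.funext_set (fun i => Nat.cast '' Set.Ici (α i).natAbs)
    (fun i => (Set.Ici_infinite _).image Nat.cast_injective.injOn) fun x hx => ?_
  choose c hc hcx using fun i => hx i trivial
  set c' : σ →₀ ℕ := Finsupp.equivFunOnFinite.symm c
  set u : σ →₀ ℕ := (α + c'.mapRange Nat.cast Nat.cast_zero).mapRange Int.toNat rfl
  have hu : shiftIndex c' u = α := by
    ext i
    have hci : (α i).natAbs ≤ c i := hc i
    simp only [shiftIndex_apply, Finsupp.mapRange_apply, Finsupp.coe_add, Pi.add_apply,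
      Finsupp.equivFunOnFinite_symm_apply_apply, Int.ofNat_toNat, c', u]
    omega
  have hx : x = fun i => (c' i : K) := funext fun i => (hcx i).symm
  simp only [LinearMap.comp_apply, Finsupp.lsingle_apply]
  rw [hx, ← hu, eval_shiftedRep_X_single, eval_shiftedRep_X_single, h]

lemma X_pow_notMem_span [IsDomain K] {i j : σ} (hij : i ≠ j) (n : ℕ) :
    (X i ^ n : MvPolynomial σ K) ∉ Ideal.span {X i ^ (n + 1), X i + X j} := by
  classical
  rw [Ideal.mem_span_pair]
  rintro ⟨p, q, hpq⟩
  have hsubst := congrArg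
    (aeval fun k => if k = i then (Polynomial.X : Polynomial K) else -Polynomial.X) hpq
  simp only [map_add, map_mul, map_pow, aeval_X, if_pos, if_neg hij.symm, add_neg_cancel,
    mul_zero, add_zero] at hsubst
  have hdvd : (Polynomial.X : Polynomial K) ^ (n + 1) ∣ Polynomial.X ^ n :=
    ⟨_, hsubst.symm.trans (mul_comm _ _)⟩
  exact n.not_succ_le_self ((pow_dvd_pow_iff Polynomial.X_ne_zero Polynomial.not_isUnit_X).1 hdvd)

end Weyl

theorem Submodule.not_isArtinian_quotient_of_strictAnti {R M : Type*} [Ring R] [AddCommGroup M]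
    [Module R M] {p : Submodule R M} {N : ℕ → Submodule R M} (hN : StrictAnti N)
    (hp : ∀ n, p ≤ N n) : ¬ IsArtinian R (M ⧸ p) := fun _ =>
  not_strictAnti_of_wellFoundedLT (fun n => (comapMkQRelIso p).symm ⟨N n, hp n⟩)
    fun _ _ hmn => (comapMkQRelIso p).symm.strictMono (Subtype.mk_lt_mk.2 (hN hmn))

def DW.toEnd : DW →ₐ[ℂ] Module.End ℂ P2 := Dsub.val

@[simp] lemma DW.toEnd_x₀ : DW.toEnd x₀ = LinearMap.mulLeft ℂ (X 0) := rfl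
@[simp] lemma DW.toEnd_x₁ : DW.toEnd x₁ = LinearMap.mulLeft ℂ (X 1) := rfl
@[simp] lemma DW.toEnd_δ₀ : DW.toEnd δ₀ = (pderiv 0).toLinearMap := rfl
@[simp] lemma DW.toEnd_δ₁ : DW.toEnd δ₁ = (pderiv 1).toLinearMap := rfl

lemma DW.exists_polyRep_eq (A : DW) : ∃ w, Weyl.polyRep ℂ (Fin 2) w = DW.toEnd A := by
  have hrange : (Weyl.polyRep ℂ (Fin 2)).range = Dsub := by
    rw [Weyl.polyRep, ← Algebra.adjoin_range_eq_range_freeAlgebra_lift, Dsub]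
    congr 1
    ext T
    simp [Fin.exists_fin_two, xop, dop, eq_comm, or_assoc]
  exact hrange.ge A.2

lemma Kid_succ_le (n : ℕ) : Kid (n + 1) ≤ Kid n := by
  refine Submodule.span_le.2 (Set.insert_subset_iff.2 ⟨?_, Set.singleton_subset_iff.2 ?_⟩)
  · rw [pow_succ']
    exact Submodule.smul_mem _ _ (Submodule.subset_span (Set.mem_insert _ _))
  · exact Submodule.subset_span (Set.mem_insert_of_mem _ rfl)

lemma euler_pow_notMem_Kid_succ (n : ℕ) : (x₀ * δ₀) ^ n ∉ Kid (n + 1) := by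
  rw [Kid, Submodule.mem_span_pair]
  rintro ⟨A, B, hAB⟩
  obtain ⟨a, ha⟩ := A.exists_polyRep_eq
  obtain ⟨b, hb⟩ := B.exists_polyRep_eq
  have hpoly : Weyl.polyRep ℂ (Fin 2)
      (a * Weyl.euler ℂ 0 ^ (n + 1) + b * (Weyl.euler ℂ 0 + Weyl.euler ℂ 1)) =
      Weyl.polyRep ℂ (Fin 2) (Weyl.euler ℂ 0 ^ n) := by
    simpa [Weyl.polyRep_euler, ha, hb] using congrArg DW.toEnd hAB
  have hgeneric := congrArg (fun T => T (Finsupp.single 0 1) 0)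
    (Weyl.shiftedRep_X_eq_of_polyRep_eq hpoly)
  simp only [map_add, map_mul, LinearMap.add_apply, Module.End.mul_apply,
    Weyl.shiftedRep_euler_single, Weyl.shiftedRep_euler_pow_single, map_smul, Finsupp.add_apply,
    Finsupp.smul_apply, smul_eq_mul, Finsupp.single_eq_same, Finsupp.coe_zero, Pi.zero_apply,
    Int.cast_zero, add_zero, mul_one] at hgeneric
  exact Weyl.X_pow_notMem_span (by decide : (0 : Fin 2) ≠ 1) n
    (Ideal.mem_span_pair.2 ⟨Weyl.shiftedRep ℂ X a (Finsupp.single 0 1) 0,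
      Weyl.shiftedRep ℂ X b (Finsupp.single 0 1) 0, by linear_combination hgeneric⟩)

lemma Kid_strictAnti : StrictAnti Kid :=
  strictAnti_nat_of_succ_lt fun n => (Kid_succ_le n).lt_of_not_ge fun h =>
    euler_pow_notMem_Kid_succ n (h (Submodule.subset_span (Set.mem_insert _ _)))

theorem stmt_17 :
    -- the `K_n` form a strictly decreasing chain `K₀ ⊋ K₁ ⊋ K₂ ⊋ ⋯`
    (∀ n : ℕ, Kid (n + 1) < Kid n) ∧
    -- in particular `D/D∇` does not have finite length
    ¬ IsFiniteLength DW (DW ⧸ (Submodule.span DW {x₀ * δ₀ + x₁ * δ₁} : Submodule DW DW)) := by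
  refine ⟨fun n => Kid_strictAnti n.lt_succ_self, fun hfl => ?_⟩
  have hle : ∀ n, Submodule.span DW {x₀ * δ₀ + x₁ * δ₁} ≤ Kid n := fun n =>
    Submodule.span_le.2 <| Set.singleton_subset_iff.2 <|
      Submodule.subset_span (Set.mem_insert_of_mem _ rfl)
  exact Submodule.not_isArtinian_quotient_of_strictAnti Kid_strictAnti hle
    (isFiniteLength_iff_isNoetherian_isArtinian.1 hfl).2

end
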